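/- In the iterated blow-up of a single 3-edge (balanced iterated blow-up of the 3-graph ([3], {123})), every 5-set of vertices spans at most 4 edges; in particular this 3-graph contains no copy of C_5 (which requires a 5-set spanning at least 5 edges). -/
import Mathlib


/-- `C₅`: the strong 5-cycle, the 3-graph on 5 vertices with edges
123, 234, 345, 451, 512. -/
def C5 : Finset (Finset (Fin 5)) := {{0,1,2},{1,2,3},{2,3,4},{3,4,0},{4,0,1}}

/-- Edges of the iterated blow-up of a single 3-edge `([3], {123})`: `adr v` is
the address of vertex `v` (its part at each level of the iteration), and a
3-set is an edge iff at the first level where its vertices do not all coincide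
they lie in the three distinct parts (and agree at all earlier levels). -/
def IterEdge3 {V : Type*} [DecidableEq V] (adr : V → ℕ → Fin 3) (e : Finset V) : Prop :=
  e.card = 3 ∧ ∃ k : ℕ, (∀ j < k, ∀ x ∈ e, ∀ y ∈ e, adr x j = adr y j) ∧
    (e.image (fun v => adr v k)).card = 3

def bnd : ℕ → ℕ
  | 0 => 0 | 1 => 0 | 2 => 0 | 3 => 1 | 4 => 2 | _ => 4

lemma arith : ∀ n a b c : ℕ, n ≤ 5 → a + b + c = n → a < n → b < n → c < n →
    a * b * c + (bnd a + bnd b + bnd c) ≤ bnd n := by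
  intro n a b c hn hsum ha hb hc
  interval_cases n <;> interval_cases a <;> interval_cases b <;> interval_cases c <;>
    first | omega | decide

lemma edges_finite {V : Type*} [DecidableEq V] (adr : V → ℕ → Fin 3) (S : Finset V) :
    {e : Finset V | e ⊆ S ∧ IterEdge3 adr e}.Finite :=
  Set.Finite.subset S.powerset.finite_toSet (fun e he => Finset.mem_powerset.2 he.1)

lemma key {V : Type*} [DecidableEq V] (adr : V → ℕ → Fin 3) :
    ∀ n : ℕ, n ≤ 5 → ∀ S : Finset V, S.card = n →
      {e : Finset V | e ⊆ S ∧ IterEdge3 adr e}.ncard ≤ bnd n := by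
  intro n
  induction n using Nat.strong_induction_on with
  | _ n ih =>
  intro hn S hS
  classical
  by_cases hc : ∃ j : ℕ, ∃ x ∈ S, ∃ y ∈ S, adr x j ≠ adr y j
  · set k := Nat.find hc with hk
    have hks : ∃ x ∈ S, ∃ y ∈ S, adr x k ≠ adr y k := Nat.find_spec hc
    have hkmin : ∀ j < k, ∀ x ∈ S, ∀ y ∈ S, adr x j = adr y j := by
      intro j hj x hx y hy
      by_contra hne
      exact absurd ⟨x, hx, y, hy, hne⟩ (Nat.find_min hc hj)
    set Sc : Fin 3 → Finset V := fun i => S.filter (fun v => adr v k = i) with hSc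
    -- sizes
    have hsum : (Sc 0).card + (Sc 1).card + (Sc 2).card = n := by
      have h := Finset.card_eq_sum_card_fiberwise
        (f := fun v => adr v k) (s := S) (t := (Finset.univ : Finset (Fin 3)))
        (fun x _ => Finset.mem_univ _)
      rw [Fin.sum_univ_three] at h
      rw [← hS]
      exact h.symm
    have hlt : ∀ i, (Sc i).card < n := by
      intro i
      obtain ⟨x, hx, y, hy, hne⟩ := hks
      have hss : Sc i ⊂ S := by
        refine Finset.ssubset_iff_of_subset (Finset.filter_subset _ _) |>.2 ?_
        rcases eq_or_ne (adr x k) i with h | h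
        · exact ⟨y, hy, by simp [hSc, h ▸ hne.symm]⟩
        · exact ⟨x, hx, by simp [hSc, h]⟩
      rw [← hS]; exact Finset.card_lt_card hss
    -- transversal finset
    set T : Finset (Finset V) :=
      ((Sc 0) ×ˢ (Sc 1) ×ˢ (Sc 2)).image (fun p => {p.1, p.2.1, p.2.2}) with hT
    -- decomposition
    have hdecomp : {e : Finset V | e ⊆ S ∧ IterEdge3 adr e} ⊆
        (↑T : Set (Finset V)) ∪ ({e | e ⊆ Sc 0 ∧ IterEdge3 adr e} ∪
          ({e | e ⊆ Sc 1 ∧ IterEdge3 adr e} ∪ {e | e ⊆ Sc 2 ∧ IterEdge3 adr e})) := by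
      rintro e ⟨heS, hcard, ke, hconst, himg⟩
      have hkke : k ≤ ke := by
        apply Nat.find_min'
        by_contra hall
        push_neg at hall
        have h1 : (e.image (fun v => adr v ke)).card ≤ 1 := Finset.card_le_one.2 (by
          rintro a ha b hb
          obtain ⟨x, hx, rfl⟩ := Finset.mem_image.1 ha
          obtain ⟨y, hy, rfl⟩ := Finset.mem_image.1 hb
          exact hall x (heS hx) y (heS hy))
        omega
      rcases eq_or_lt_of_le hkke with heq | hlt'
      · -- transversal
        left
        have huniv : e.image (fun v => adr v ke) = Finset.univ :=
          Finset.eq_univ_of_card _ (by simp [himg])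
        have hget : ∀ i : Fin 3, ∃ x ∈ e, adr x ke = i := by
          intro i
          have : i ∈ e.image (fun v => adr v ke) := huniv ▸ Finset.mem_univ i
          simpa using Finset.mem_image.1 this
        obtain ⟨x0, hx0, ha0⟩ := hget 0
        obtain ⟨x1, hx1, ha1⟩ := hget 1
        obtain ⟨x2, hx2, ha2⟩ := hget 2
        have h01 : x0 ≠ x1 := by rintro rfl; rw [ha0] at ha1; exact absurd ha1 (by decide)
        have h02 : x0 ≠ x2 := by rintro rfl; rw [ha0] at ha2; exact absurd ha2 (by decide)
        have h12 : x1 ≠ x2 := by rintro rfl; rw [ha1] at ha2; exact absurd ha2 (by decide)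
        have hecard : ({x0, x1, x2} : Finset V).card = 3 :=
          Finset.card_eq_three.2 ⟨x0, x1, x2, h01, h02, h12, rfl⟩
        have hee : ({x0, x1, x2} : Finset V) = e := by
          apply Finset.eq_of_subset_of_card_le
          · intro z hz
            simp only [Finset.mem_insert, Finset.mem_singleton] at hz
            rcases hz with rfl | rfl | rfl <;> assumption
          · omega
        refine Finset.mem_coe.2 (Finset.mem_image.2 ⟨(x0, x1, x2), ?_, hee⟩)
        refine Finset.mem_product.2 ⟨?_, Finset.mem_product.2 ⟨?_, ?_⟩⟩
        · exact Finset.mem_filter.2 ⟨heS hx0, by rw [heq]; exact ha0⟩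
        · exact Finset.mem_filter.2 ⟨heS hx1, by rw [heq]; exact ha1⟩
        · exact Finset.mem_filter.2 ⟨heS hx2, by rw [heq]; exact ha2⟩
      · -- inside one class
        right
        have hmem3 : e.Nonempty := Finset.card_pos.1 (by omega)
        obtain ⟨x0, hx0⟩ := hmem3
        have hcl : ∀ y ∈ e, adr y k = adr x0 k := fun y hy => hconst k hlt' y hy x0 hx0
        have hin : e ⊆ Sc (adr x0 k) := fun y hy =>
          Finset.mem_filter.2 ⟨heS hy, hcl y hy⟩
        have hIE : IterEdge3 adr e := ⟨hcard, ke, hconst, himg⟩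
        have : ∀ i, adr x0 k = i → e ∈ {e : Finset V | e ⊆ Sc i ∧ IterEdge3 adr e} :=
          fun i hi => ⟨hi ▸ hin, hIE⟩
        obtain ⟨i, hi⟩ : ∃ i, adr x0 k = i := ⟨_, rfl⟩
        fin_cases i
        · exact Or.inl (this _ hi)
        · exact Or.inr (Or.inl (this _ hi))
        · exact Or.inr (Or.inr (this _ hi))
    -- counting
    have hTcard : (↑T : Set (Finset V)).ncard ≤ (Sc 0).card * (Sc 1).card * (Sc 2).card := by
      rw [Set.ncard_coe_finset]
      calc T.card ≤ ((Sc 0) ×ˢ (Sc 1) ×ˢ (Sc 2)).card := Finset.card_image_le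
        _ = (Sc 0).card * (Sc 1).card * (Sc 2).card := by
            simp [Finset.card_product, mul_assoc]
    have hEi : ∀ i, {e : Finset V | e ⊆ Sc i ∧ IterEdge3 adr e}.ncard ≤ bnd (Sc i).card :=
      fun i => ih (Sc i).card (hS ▸ hlt i) (le_trans (Nat.le_of_lt (hS ▸ hlt i)) (hS ▸ hn)) _ rfl
    have hfin : ∀ (A : Finset V), {e : Finset V | e ⊆ A ∧ IterEdge3 adr e}.Finite :=
      fun A => edges_finite adr A
    calc {e : Finset V | e ⊆ S ∧ IterEdge3 adr e}.ncard
        ≤ ((↑T : Set (Finset V)) ∪ ({e | e ⊆ Sc 0 ∧ IterEdge3 adr e} ∪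
          ({e | e ⊆ Sc 1 ∧ IterEdge3 adr e} ∪ {e | e ⊆ Sc 2 ∧ IterEdge3 adr e}))).ncard := by
          exact Set.ncard_le_ncard hdecomp
            (T.finite_toSet.union ((hfin _).union ((hfin _).union (hfin _))))
      _ ≤ (↑T : Set (Finset V)).ncard + ({e | e ⊆ Sc 0 ∧ IterEdge3 adr e} ∪
          ({e | e ⊆ Sc 1 ∧ IterEdge3 adr e} ∪ {e | e ⊆ Sc 2 ∧ IterEdge3 adr e})).ncard :=
          Set.ncard_union_le _ _
      _ ≤ (↑T : Set (Finset V)).ncard + ({e : Finset V | e ⊆ Sc 0 ∧ IterEdge3 adr e}.ncard +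
          ({e : Finset V | e ⊆ Sc 1 ∧ IterEdge3 adr e} ∪
            {e : Finset V | e ⊆ Sc 2 ∧ IterEdge3 adr e}).ncard) := by
          gcongr
          exact Set.ncard_union_le _ _
      _ ≤ (↑T : Set (Finset V)).ncard + ({e : Finset V | e ⊆ Sc 0 ∧ IterEdge3 adr e}.ncard +
          ({e : Finset V | e ⊆ Sc 1 ∧ IterEdge3 adr e}.ncard +
            {e : Finset V | e ⊆ Sc 2 ∧ IterEdge3 adr e}.ncard)) := by
          gcongr
          exact Set.ncard_union_le _ _
      _ ≤ (Sc 0).card * (Sc 1).card * (Sc 2).card +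
          (bnd (Sc 0).card + (bnd (Sc 1).card + bnd (Sc 2).card)) := by
          exact add_le_add hTcard (add_le_add (hEi 0) (add_le_add (hEi 1) (hEi 2)))
      _ ≤ bnd n := by
          have := arith n (Sc 0).card (Sc 1).card (Sc 2).card hn hsum (hlt 0) (hlt 1) (hlt 2)
          omega
  · push_neg at hc
    have : {e : Finset V | e ⊆ S ∧ IterEdge3 adr e} = ∅ := by
      ext e
      simp only [Set.mem_setOf_eq, Set.mem_empty_iff_false, iff_false, not_and]
      rintro heS ⟨hcard, ke, hconst, himg⟩
      have h1 : (e.image (fun v => adr v ke)).card ≤ 1 := by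
        apply Finset.card_le_one.2
        rintro a ha b hb
        obtain ⟨x, hx, rfl⟩ := Finset.mem_image.1 ha
        obtain ⟨y, hy, rfl⟩ := Finset.mem_image.1 hb
        exact hc ke x (heS hx) y (heS hy)
      omega
    rw [this]; simp [bnd]

/-- In an iterated blow-up of a single 3-edge, every 5-set of vertices spans at
most 4 edges; in particular the 3-graph contains no copy of `C₅`. -/
theorem iterated_blowup_edge_five_sets {V : Type*} [DecidableEq V]
    (adr : V → ℕ → Fin 3) :
    (∀ S : Finset V, S.card = 5 →
      {e : Finset V | e ⊆ S ∧ IterEdge3 adr e}.ncard ≤ 4) ∧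
    ¬ ∃ f : Fin 5 → V, Function.Injective f ∧ ∀ e ∈ C5, IterEdge3 adr (e.image f) := by
  have h1 : ∀ S : Finset V, S.card = 5 →
      {e : Finset V | e ⊆ S ∧ IterEdge3 adr e}.ncard ≤ 4 :=
    fun S hS => key adr 5 (le_refl 5) S hS
  refine ⟨h1, ?_⟩
  rintro ⟨f, hinj, hf⟩
  classical
  set S : Finset V := Finset.univ.image f with hSdef
  have hScard : S.card = 5 := by
    rw [hSdef, Finset.card_image_of_injective _ hinj]
    simp
  set F : Finset (Finset V) := C5.image (fun e => e.image f) with hF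
  have hFcard : F.card = 5 := by
    rw [hF, Finset.card_image_of_injective _ (Finset.image_injective hinj)]
    decide
  have hsub : (↑F : Set (Finset V)) ⊆ {e : Finset V | e ⊆ S ∧ IterEdge3 adr e} := by
    intro e' he'
    obtain ⟨e, heC5, rfl⟩ := Finset.mem_image.1 (Finset.mem_coe.1 he')
    refine ⟨?_, hf e heC5⟩
    intro x hx
    obtain ⟨y, _, rfl⟩ := Finset.mem_image.1 hx
    exact Finset.mem_image.2 ⟨y, Finset.mem_univ y, rfl⟩
  have h5 : 5 ≤ {e : Finset V | e ⊆ S ∧ IterEdge3 adr e}.ncard := by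
    have := Set.ncard_le_ncard hsub (edges_finite adr S)
    rwa [Set.ncard_coe_finset, hFcard] at this
  have := h1 S hScard
  omega
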